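/- Let p be a polynomial of degree d over the rationals and let h(t) = (1-t)^{d+1} · Σ_{k≥0} p(k) t^k (a polynomial of degree ≤ d). Suppose h is palindromic with gamma-vector (γ_0,...,γ_m), i.e., h(t) = Σ_{i=0}^{m} γ_i (1+t)^{d-2i} t^i. Then p(x) = Σ_{i=0}^{m} (-1)^i c_i · C_{d-2i}(x), where c_i = Σ_{j=i}^{m} (1/4^j) binom(j,i) γ_j and C_n is the n-th cross-polynomial. -/

import Mathlib

open Polynomial PowerSeries

/-- The polynomial `binom(n + x - k, n)` in the variable `x`. -/
noncomputable def binomPoly (n k : ℕ) : Polynomial ℚ :=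
  Polynomial.C ((n.factorial : ℚ)⁻¹) *
    ∏ j ∈ Finset.range n, (Polynomial.X + Polynomial.C ((n : ℚ) - k - j))

/-- The `n`-th cross-polynomial `C_n(x) = ∑_{j=0}^n binom(n,j) binom(n+x-j,n)`. -/
noncomputable def crossPoly (n : ℕ) : Polynomial ℚ :=
  ∑ j ∈ Finset.range (n + 1), Polynomial.C (n.choose j : ℚ) * binomPoly n j

lemma binomPoly_eval (n j k : ℕ) (hj : j ≤ n) :
    (binomPoly n j).eval (k : ℚ) =
      if j ≤ k then (((n + (k - j)).choose n : ℕ) : ℚ) else 0 := by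
  rw [binomPoly, Polynomial.eval_mul, Polynomial.eval_C, Polynomial.eval_prod]
  by_cases h : j ≤ k
  · rw [if_pos h]
    have hprod : ∀ l ∈ Finset.range n,
        Polynomial.eval (k:ℚ) (Polynomial.X + Polynomial.C ((n:ℚ) - j - l))
          = ((n + (k - j) - l : ℕ) : ℚ) := by
      intro l hl
      simp only [Finset.mem_range] at hl
      rw [Polynomial.eval_add, Polynomial.eval_X, Polynomial.eval_C]
      have h1 : l ≤ n + (k - j) := by omega
      rw [Nat.cast_sub h1, Nat.cast_add, Nat.cast_sub h]
      ring
    rw [Finset.prod_congr rfl hprod, ← Nat.cast_prod, ← Nat.descFactorial_eq_prod_range,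
      Nat.descFactorial_eq_factorial_mul_choose, Nat.cast_mul, ← mul_assoc,
      inv_mul_cancel₀ (by exact_mod_cast n.factorial_ne_zero), one_mul]
  · rw [if_neg h]
    rw [Finset.prod_eq_zero (Finset.mem_range.2 (show n - j + k < n by omega))]
    · ring
    · rw [Polynomial.eval_add, Polynomial.eval_X, Polynomial.eval_C,
        Nat.cast_add, Nat.cast_sub hj]
      ring

lemma mk_binomPoly (n j : ℕ) (hj : j ≤ n) :
    (PowerSeries.mk fun k => (binomPoly n j).eval (k : ℚ))
      = (PowerSeries.X : ℚ⟦X⟧) ^ j * (invOneSubPow ℚ (n+1)).val := by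
  ext k
  rw [coeff_mk, PowerSeries.coeff_X_pow_mul', invOneSubPow_val_succ_eq_mk_add_choose,
    binomPoly_eval n j k hj]
  split <;> simp [coeff_mk]

lemma mk_crossPoly (n : ℕ) :
    (PowerSeries.mk fun k => (crossPoly n).eval (k : ℚ)) * (1 - PowerSeries.X) ^ (n + 1)
      = (1 + PowerSeries.X : ℚ⟦X⟧) ^ n := by
  have h1 : (PowerSeries.mk fun k => (crossPoly n).eval (k : ℚ))
      = ∑ j ∈ Finset.range (n+1),
        (PowerSeries.C (n.choose j : ℚ)) * ((PowerSeries.X : ℚ⟦X⟧) ^ j * (invOneSubPow ℚ (n+1)).val) := by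
    ext k
    simp only [coeff_mk, crossPoly, Polynomial.eval_finset_sum, Polynomial.eval_mul,
      Polynomial.eval_C, map_sum, PowerSeries.coeff_C_mul]
    refine Finset.sum_congr rfl fun j hj => ?_
    rw [← mk_binomPoly n j (by simpa [Nat.lt_succ_iff] using Finset.mem_range.1 hj), coeff_mk]
  rw [h1, Finset.sum_mul]
  have h2 : ∀ j ∈ Finset.range (n+1),
      (PowerSeries.C (n.choose j : ℚ)) * ((PowerSeries.X : ℚ⟦X⟧) ^ j * (invOneSubPow ℚ (n+1)).val)
        * (1 - PowerSeries.X) ^ (n+1)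
      = (PowerSeries.C (n.choose j : ℚ)) * (PowerSeries.X : ℚ⟦X⟧) ^ j := by
    intro j hj
    have : ((invOneSubPow ℚ (n+1)).val) * (1 - PowerSeries.X) ^ (n+1) = 1 := by
      rw [← invOneSubPow_inv_eq_one_sub_pow]
      exact (invOneSubPow ℚ (n+1)).val_inv
    rw [mul_assoc, mul_assoc, this, mul_one]
  rw [Finset.sum_congr rfl h2]
  rw [add_comm (1 : ℚ⟦X⟧), add_pow]
  refine Finset.sum_congr rfl fun j hj => ?_
  simp [mul_comm]

lemma key_poly (d m : ℕ) (hm : 2*m ≤ d) (γ : ℕ → ℚ) :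
    ∑ j ∈ Finset.range (m + 1),
      Polynomial.C (γ j) * (1 + Polynomial.X) ^ (d - 2*j) * Polynomial.X ^ j
    = ∑ i ∈ Finset.range (m + 1),
        Polynomial.C ((-1:ℚ)^i * ∑ j ∈ Finset.Icc i m, (1/4^j) * (j.choose i : ℚ) * γ j)
          * ((1 + Polynomial.X)^(d - 2*i) * (1 - Polynomial.X)^(2*i)) := by
  have hX : ∀ j : ℕ, (Polynomial.X : ℚ[X])^j
      = Polynomial.C ((1/4 : ℚ)^j) * ∑ i ∈ Finset.range (j+1),
          (-(1 - Polynomial.X)^2)^i * ((1 + Polynomial.X)^2)^(j - i) * (j.choose i : ℚ[X]) := by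
    intro j
    rw [← add_pow]
    have h4 : (-(1 - Polynomial.X)^2) + ((1 + Polynomial.X)^2)
        = (4 : ℚ[X]) * Polynomial.X := by ring
    rw [h4, mul_pow, ← mul_assoc,
      show (4:ℚ[X]) = Polynomial.C (4:ℚ) from (map_ofNat _ 4).symm,
      map_pow, ← mul_pow, ← Polynomial.C_mul]
    norm_num
  have step : ∀ j ∈ Finset.range (m+1),
      Polynomial.C (γ j) * (1 + Polynomial.X : ℚ[X]) ^ (d - 2*j) * Polynomial.X ^ j
      = ∑ i ∈ Finset.range (j+1),
          Polynomial.C ((-1:ℚ)^i * ((1/4^j) * (j.choose i : ℚ) * γ j))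
            * ((1 + Polynomial.X)^(d - 2*i) * (1 - Polynomial.X)^(2*i)) := by
    intro j hj
    have hjm : j ≤ m := by simpa [Nat.lt_succ_iff] using Finset.mem_range.1 hj
    rw [hX j]
    simp only [Finset.mul_sum]
    refine Finset.sum_congr rfl fun i hi => ?_
    have hij : i ≤ j := by simpa [Nat.lt_succ_iff] using Finset.mem_range.1 hi
    have e2 : ((1 - Polynomial.X : ℚ[X])^2)^i = (1 - Polynomial.X)^(2*i) := (pow_mul _ 2 _).symm
    have e1 : ((1 + Polynomial.X : ℚ[X])^2)^(j-i) = (1 + Polynomial.X)^(2*(j-i)) := (pow_mul _ 2 _).symm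
    have e4 : (-(1 - Polynomial.X)^2 : ℚ[X])^i
        = Polynomial.C ((-1:ℚ)^i) * (1 - Polynomial.X)^(2*i) := by
      rw [neg_pow, ← e2, map_pow, map_neg, map_one]
    have e3 : (1 + Polynomial.X : ℚ[X])^(d - 2*j) * (1 + Polynomial.X)^(2*(j-i))
        = (1 + Polynomial.X)^(d - 2*i) := by
      rw [← pow_add]; congr 1; omega
    have e5 : ((j.choose i : ℚ[X])) = Polynomial.C ((j.choose i : ℚ)) := by
      simp
    have e6 : (1/4^j : ℚ) = (1/4)^j := by
      rw [div_pow]; norm_num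
    rw [e4, e1, e5, ← e3, e6]
    simp only [map_mul, map_pow]
    ring
  rw [Finset.sum_congr rfl step]
  rw [Finset.sum_comm' (s := Finset.range (m+1)) (t := fun j => Finset.range (j+1))
    (t' := Finset.range (m+1)) (s' := fun i => Finset.Icc i m)
    (by intro j i; simp [Nat.lt_succ_iff]; omega)]
  refine Finset.sum_congr rfl fun i hi => ?_
  rw [Finset.mul_sum, map_sum, Finset.sum_mul]

/-- If `h(t) = (1-t)^{d+1} ∑_{k≥0} p(k) t^k` is palindromic with gamma-vector
`(γ_0, …, γ_m)`, i.e. `h(t) = ∑_{i=0}^m γ_i (1+t)^{d-2i} t^i`, then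
`p(x) = ∑_{i=0}^m (-1)^i c_i C_{d-2i}(x)` with `c_i = ∑_{j=i}^m 4^{-j} binom(j,i) γ_j`. -/
theorem gamma_vector_cross_expansion (p h : Polynomial ℚ) (d m : ℕ)
    (hdeg : p.natDegree = d) (hm : 2 * m ≤ d)
    (hh : (h : PowerSeries ℚ) =
      (PowerSeries.mk fun k => p.eval (k : ℚ)) * (1 - PowerSeries.X : PowerSeries ℚ) ^ (d + 1))
    (γ : ℕ → ℚ)
    (hγ : h = ∑ i ∈ Finset.range (m + 1),
      Polynomial.C (γ i) * (1 + Polynomial.X) ^ (d - 2 * i) * Polynomial.X ^ i) :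
    p = ∑ i ∈ Finset.range (m + 1),
      Polynomial.C ((-1 : ℚ) ^ i * ∑ j ∈ Finset.Icc i m, (1 / 4 ^ j) * (j.choose i : ℚ) * γ j) *
        crossPoly (d - 2 * i) := by
  set c : ℕ → ℚ :=
    fun i => (-1 : ℚ) ^ i * ∑ j ∈ Finset.Icc i m, (1 / 4 ^ j) * (j.choose i : ℚ) * γ j with hc
  set q : ℚ[X] := ∑ i ∈ Finset.range (m + 1), Polynomial.C (c i) * crossPoly (d - 2 * i)
    with hqdef
  -- power series identity for q
  have h1 : (PowerSeries.mk fun k => q.eval (k:ℚ))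
      = ∑ i ∈ Finset.range (m+1),
          PowerSeries.C (c i) * PowerSeries.mk fun k => (crossPoly (d-2*i)).eval (k:ℚ) := by
    ext k
    simp [hqdef, Polynomial.eval_finset_sum, PowerSeries.coeff_C_mul]
  have hq : (PowerSeries.mk fun k => q.eval (k:ℚ)) * (1 - PowerSeries.X) ^ (d + 1)
      = ∑ i ∈ Finset.range (m+1),
          PowerSeries.C (c i)
            * ((1 + PowerSeries.X)^(d - 2*i) * (1 - PowerSeries.X)^(2*i)) := by
    rw [h1, Finset.sum_mul]
    refine Finset.sum_congr rfl fun i hi => ?_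
    have him : i ≤ m := by simpa [Nat.lt_succ_iff] using Finset.mem_range.1 hi
    have hexp : d + 1 = (d - 2*i + 1) + 2*i := by omega
    rw [hexp, pow_add, mul_assoc, ← mul_assoc (PowerSeries.mk _), mk_crossPoly (d - 2*i)]
  -- power series identity for h
  have hcast : (h : PowerSeries ℚ)
      = ∑ i ∈ Finset.range (m+1),
          PowerSeries.C (c i)
            * ((1 + PowerSeries.X)^(d - 2*i) * (1 - PowerSeries.X)^(2*i)) := by
    rw [hγ, key_poly d m hm γ, ← Polynomial.coeToPowerSeries.ringHom_apply, map_sum]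
    refine Finset.sum_congr rfl fun i hi => ?_
    simp [map_mul, map_pow, map_add, map_sub, map_one, Polynomial.coe_C, Polynomial.coe_X, hc]
  -- cancel the unit
  have hu : IsUnit ((1 - PowerSeries.X : ℚ⟦X⟧) ^ (d+1)) := by
    rw [← invOneSubPow_inv_eq_one_sub_pow]
    exact ⟨(invOneSubPow ℚ (d+1))⁻¹, rfl⟩
  have hmk : (PowerSeries.mk fun k => p.eval (k:ℚ)) = PowerSeries.mk fun k => q.eval (k:ℚ) :=
    hu.mul_right_cancel (by rw [← hh, hq, hcast])
  have heval : ∀ k : ℕ, p.eval (k:ℚ) = q.eval (k:ℚ) := fun k => by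
    have := congrArg (PowerSeries.coeff k) hmk
    simpa using this
  have hz : p - q = 0 := by
    apply Polynomial.eq_zero_of_infinite_isRoot
    refine Set.Infinite.mono ?_ (Set.infinite_range_of_injective (Nat.cast_injective (R := ℚ)))
    rintro x ⟨k, rfl⟩
    simp [Polynomial.IsRoot, heval k]
  have := sub_eq_zero.1 hz
  rw [this]
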